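/- arXiv:2404.15716 — 3 statements merged into one kernel-verified Lean document; each statement's English description precedes it below -/
import Mathlib

section
/- Euler's pentagonal number theorem modulo 2: the infinite product ∏_{k≥1}(1 - q^k), viewed as a formal power series over ℤ/2ℤ, equals the sum over all integers m of q^{m(3m-1)/2}. -/
/-!
Mathlib's pentagonal number theorem identifies the coefficients of the partial products
`∏ k ∈ s, (1 - X ^ (k + 1))`, for `s` large enough, with those of `pentagonalSeries`. The
coefficient of `X ^ n` is already fixed by the factors with `k < n + 1`, since the others are
`1` modulo `X ^ (n + 1)`; and in characteristic two the signs `(-1) ^ k` of the pentagonal series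
all become `1`.
-/

open PowerSeries
open scoped Classical

/-- `f t = ∏_{k≥1} (1 - q^{tk})` as a formal power series over `ZMod 2`. -/
noncomputable def f (t : ℕ) : PowerSeries (ZMod 2) :=
  PowerSeries.mk fun n =>
    PowerSeries.coeff (R := ZMod 2) n
      (∏ k ∈ Finset.range (n + 1), (1 - PowerSeries.X ^ (t * (k + 1))))

namespace PowerSeries

variable {R : Type*} [CommRing R]

theorem X_pow_succ_dvd_prod_one_sub_X_pow_sub_one {n : ℕ} {s : Finset ℕ} (hs : ∀ k ∈ s, n ≤ k) :
    X ^ (n + 1) ∣ ∏ k ∈ s, (1 - X ^ (k + 1) : R⟦X⟧) - 1 := by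
  rw [← Ideal.mem_span_singleton, ← Ideal.Quotient.eq_zero_iff_mem, map_sub, map_prod, map_one,
    sub_eq_zero]
  refine Finset.prod_eq_one fun k hk => ?_
  rw [map_sub, map_one, Ideal.Quotient.eq_zero_iff_mem.mpr, sub_zero]
  exact Ideal.mem_span_singleton.mpr (pow_dvd_pow X (Nat.succ_le_succ (hs k hk)))

theorem coeff_prod_one_sub_X_pow_of_subset {n : ℕ} {s t : Finset ℕ} (hts : t ⊆ s)
    (hs : ∀ k ∈ s \ t, n ≤ k) :
    coeff n (∏ k ∈ s, (1 - X ^ (k + 1) : R⟦X⟧)) = coeff n (∏ k ∈ t, (1 - X ^ (k + 1) : R⟦X⟧)) := by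
  obtain ⟨g, hg⟩ := X_pow_succ_dvd_prod_one_sub_X_pow_sub_one (R := R) hs
  rw [← Finset.prod_sdiff hts, eq_add_of_sub_eq hg, add_mul, one_mul, map_add, mul_assoc,
    coeff_X_pow_mul', if_neg (by omega), zero_add]

theorem coeff_prod_range_one_sub_X_pow (n : ℕ) :
    coeff n (∏ k ∈ Finset.range (n + 1), (1 - X ^ (k + 1) : R⟦X⟧)) =
      coeff n (pentagonalSeries R) := by
  obtain ⟨s, hs⟩ := Filter.eventually_atTop.mp (coeff_prod_one_sub_X_pow_eventually_eq R n)
  rw [← hs (s ∪ Finset.range (n + 1)) Finset.subset_union_left,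
    coeff_prod_one_sub_X_pow_of_subset Finset.subset_union_right]
  intro k hk
  simp only [Finset.mem_sdiff, Finset.mem_range] at hk
  omega

theorem coeff_pentagonalSeries_of_charTwo [CharP R 2] [DecidablePred (· ∈ Set.range pentagonal)]
    (n : ℕ) : coeff n (pentagonalSeries R) = if n ∈ Set.range pentagonal then 1 else 0 := by
  split_ifs with h
  · obtain ⟨k, rfl⟩ := h
    rw [coeff_pentagonalSeries_pentagonal]
    rcases Int.units_eq_one_or k.negOnePow with h | h <;>
      simp only [h, Units.val_one, Units.val_neg, Int.cast_one, Int.cast_neg, CharTwo.neg_eq]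
  · exact coeff_pentagonalSeries_eq_zero R h

end PowerSeries

theorem exists_pentagonal_eq_iff {n : ℕ} :
    (∃ k, pentagonal k = n) ↔ ∃ m : ℤ, (n : ℤ) * 2 = m * (3 * m - 1) := by
  refine exists_congr fun m => ⟨fun h => ?_, fun h => ?_⟩
  · rw [← two_mul_natCast_pentagonal, h, mul_comm]
  · have := two_mul_natCast_pentagonal m
    omega

/-- Euler's pentagonal number theorem mod 2: the coefficient of `q^n` in
`∏_{k≥1}(1-q^k)` over `ZMod 2` is `1` exactly when `n` is a generalized
pentagonal number `m(3m-1)/2`, `m ∈ ℤ`, and `0` otherwise. -/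
theorem pentagonal_mod_two :
    ∀ n : ℕ, PowerSeries.coeff (R := ZMod 2) n (f 1) =
      if ∃ m : ℤ, (n : ℤ) * 2 = m * (3 * m - 1) then 1 else 0 := by
  intro n
  simp_rw [f, coeff_mk, one_mul, coeff_prod_range_one_sub_X_pow,
    coeff_pentagonalSeries_of_charTwo, Set.mem_range, exists_pentagonal_eq_iff]
end

section
/- Jacobi's identity modulo 2: the cube of the infinite product ∏_{k≥1}(1 - q^k), viewed as a formal power series over ℤ/2ℤ, equals ∑_{n≥0} q^{n(n+1)/2}. -/
/-!
Over `𝔽₂` we have `1 - q^k = 1 + q^k`, so modulo `q^N` the cube `f₁³` agrees with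
`(q;q)_N · (-q;q)_N (-q;q)_{N-1}`. In the finite Jacobi triple product
`∏_{k=1}^N (1 + z q^k)(1 + z⁻¹ q^{k-1}) = ∑_{m=-N}^N [2N, N+m]_q q^{m(m+1)/2} z^m`, the terms with
`m ≢ N (mod 2)` alone already sum to `(-q;q)_N (-q;q)_{N-1}`: multiplying by
`(1 + z q^{N+1})(1 + z⁻¹ q^N)` mixes the two parity classes symmetrically, so once they agree
(at `N = 1`) they stay equal, each being multiplied by `(1 + q^N)(1 + q^{N+1})`. Since
`(q;q)_N [2N, N+m]_q ≡ 1` modulo `q^{N-|m|+1}`, the coefficient of `q^n` (with `N = n + 1`) counts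
the `m ≡ n (mod 2)` with `m(m+1)/2 = n`; of the two solutions `m` and `-m-1` of this equation
exactly one has the right parity.
-/

open PowerSeries
open scoped Classical

open Finset

variable {R : Type*} [CommRing R]

noncomputable def qPochhammer (n : ℕ) : R⟦X⟧ := ∏ i ∈ range n, (1 - X ^ (i + 1))

noncomputable def negQPochhammer (n : ℕ) : R⟦X⟧ := ∏ i ∈ range n, (1 + X ^ (i + 1))

noncomputable def qBinom : ℕ → ℕ → R⟦X⟧
  | _, 0 => 1
  | 0, _ + 1 => 0
  | n + 1, k + 1 => qBinom n k + X ^ (k + 1) * qBinom n (k + 1)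

lemma qPochhammer_succ (n : ℕ) :
    (qPochhammer (n + 1) : R⟦X⟧) = qPochhammer n * (1 - X ^ (n + 1)) :=
  prod_range_succ _ n

lemma negQPochhammer_succ (n : ℕ) :
    (negQPochhammer (n + 1) : R⟦X⟧) = negQPochhammer n * (1 + X ^ (n + 1)) :=
  prod_range_succ _ n

lemma isUnit_qPochhammer (n : ℕ) : IsUnit (qPochhammer n : R⟦X⟧) := by
  simp [qPochhammer, isUnit_iff_constantCoeff]

@[simp] lemma qBinom_zero_right (n : ℕ) : (qBinom n 0 : R⟦X⟧) = 1 := by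
  cases n <;> rfl

lemma qBinom_succ_succ (n k : ℕ) :
    (qBinom (n + 1) (k + 1) : R⟦X⟧) = qBinom n k + X ^ (k + 1) * qBinom n (k + 1) := rfl

lemma qBinom_eq_zero_of_lt {n k : ℕ} (h : n < k) : (qBinom n k : R⟦X⟧) = 0 := by
  induction n generalizing k with
  | zero => obtain ⟨k, rfl⟩ := Nat.exists_eq_succ_of_ne_zero h.ne'; rfl
  | succ n ih =>
    obtain ⟨k, rfl⟩ := Nat.exists_eq_succ_of_ne_zero (by omega : k ≠ 0)
    rw [qBinom_succ_succ, ih (by omega), ih (by omega), mul_zero, add_zero]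

@[simp] lemma qBinom_self (n : ℕ) : (qBinom n n : R⟦X⟧) = 1 := by
  induction n with
  | zero => rfl
  | succ n ih => rw [qBinom_succ_succ, ih, qBinom_eq_zero_of_lt n.lt_succ_self, mul_zero, add_zero]

lemma qPochhammer_mul_qPochhammer_mul_qBinom (k m : ℕ) :
    (qPochhammer k * qPochhammer m * qBinom (k + m) k : R⟦X⟧) = qPochhammer (k + m) := by
  induction h : k + m generalizing k m with
  | zero => obtain ⟨rfl, rfl⟩ : k = 0 ∧ m = 0 := by omega
            simp [qPochhammer]
  | succ n ih =>
    obtain _ | k := k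
    · obtain rfl : m = n + 1 := by omega
      simp [qPochhammer]
    obtain _ | m := m
    · obtain rfl : k = n := by omega
      simp [qPochhammer]
    have h₁ := ih k (m + 1) (by omega)
    have h₂ := ih (k + 1) m (by omega)
    have hX : (X : R⟦X⟧) ^ (k + 1) * X ^ (m + 1) = X ^ (n + 1) := by
      rw [← pow_add, show k + 1 + (m + 1) = n + 1 by omega]
    rw [qBinom_succ_succ, qPochhammer_succ n]
    linear_combination (1 - X ^ (k + 1)) * h₁ + X ^ (k + 1) * (1 - X ^ (m + 1)) * h₂
      - qPochhammer n * hX + qPochhammer (m + 1) * qBinom n k * qPochhammer_succ (R := R) k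
      + X ^ (k + 1) * qPochhammer (k + 1) * qBinom n (k + 1) * qPochhammer_succ (R := R) m

lemma eq_qBinom_of_mul_eq {n k m : ℕ} (hn : k + m = n) {a : R⟦X⟧}
    (h : qPochhammer k * qPochhammer m * a = qPochhammer n) : a = qBinom n k := by
  subst hn
  exact ((isUnit_qPochhammer k).mul (isUnit_qPochhammer m)).mul_left_cancel
    (h.trans (qPochhammer_mul_qPochhammer_mul_qBinom k m).symm)

lemma qBinom_add_comm (k m : ℕ) : (qBinom (k + m) k : R⟦X⟧) = qBinom (k + m) m :=
  eq_qBinom_of_mul_eq (add_comm m k) (by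
    rw [mul_comm (qPochhammer m), qPochhammer_mul_qPochhammer_mul_qBinom])

lemma qBinom_succ_succ' (n k : ℕ) :
    (qBinom (n + 1) (k + 1) : R⟦X⟧) = X ^ (n - k) * qBinom n k + qBinom n (k + 1) := by
  rcases lt_trichotomy k n with hkn | rfl | hnk
  · obtain ⟨m, rfl⟩ : ∃ m, n = k + m + 1 := ⟨n - k - 1, by omega⟩
    have h₁ : qPochhammer k * qPochhammer (m + 1) * qBinom (k + m + 1) k =
        (qPochhammer (k + m + 1) : R⟦X⟧) :=
      qPochhammer_mul_qPochhammer_mul_qBinom k (m + 1)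
    have h₂ : qPochhammer (k + 1) * qPochhammer m * qBinom (k + m + 1) (k + 1) =
        (qPochhammer (k + m + 1) : R⟦X⟧) := by
      simpa only [add_right_comm] using qPochhammer_mul_qPochhammer_mul_qBinom (R := R) (k + 1) m
    have hX : (X : R⟦X⟧) ^ (m + 1) * X ^ (k + 1) = X ^ (k + m + 1 + 1) := by
      rw [← pow_add, show m + 1 + (k + 1) = k + m + 1 + 1 by omega]
    rw [show k + m + 1 - k = m + 1 by omega]
    refine (eq_qBinom_of_mul_eq (k := k + 1) (m := m + 1) (by omega) ?_).symm
    rw [qPochhammer_succ (k + m + 1)]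
    linear_combination X ^ (m + 1) * (1 - X ^ (k + 1)) * h₁ + (1 - X ^ (m + 1)) * h₂
      - qPochhammer (k + m + 1) * hX
      + X ^ (m + 1) * qPochhammer (m + 1) * qBinom (k + m + 1) k * qPochhammer_succ (R := R) k
      + qPochhammer (k + 1) * qBinom (k + m + 1) (k + 1) * qPochhammer_succ (R := R) m
  · simp [qBinom_eq_zero_of_lt]
  · simp [qBinom_eq_zero_of_lt, hnk, Nat.lt_succ_of_lt hnk]

lemma qPochhammer_mul_qBinom (k m : ℕ) :
    (qPochhammer m * qBinom (k + m) k : R⟦X⟧) = ∏ i ∈ range m, (1 - X ^ (k + i + 1)) :=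
  (isUnit_qPochhammer k).mul_left_cancel (by
    rw [← mul_assoc, qPochhammer_mul_qPochhammer_mul_qBinom, qPochhammer, prod_range_add]; rfl)

lemma dvd_prod_sub_one {S ι : Type*} [CommRing S] {a : S} {s : Finset ι} {g : ι → S}
    (h : ∀ i ∈ s, a ∣ g i - 1) : a ∣ ∏ i ∈ s, g i - 1 := by
  rw [← Ideal.mem_span_singleton, ← Ideal.Quotient.eq, map_prod, map_one]
  exact prod_eq_one fun i hi => by
    rw [← map_one (Ideal.Quotient.mk _), Ideal.Quotient.eq, Ideal.mem_span_singleton]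
    exact h i hi

lemma X_pow_dvd_prod_one_sub_X_pow_sub_one (k m : ℕ) :
    (X : R⟦X⟧) ^ (k + 1) ∣ ∏ i ∈ range m, (1 - X ^ (k + i + 1)) - 1 :=
  dvd_prod_sub_one fun i _ => ⟨-X ^ i, by ring⟩

lemma X_pow_dvd_qPochhammer_sub {N M : ℕ} (h : N ≤ M) :
    (X : R⟦X⟧) ^ (N + 1) ∣ qPochhammer M - qPochhammer N := by
  obtain ⟨m, rfl⟩ := Nat.exists_eq_add_of_le h
  rw [qPochhammer, prod_range_add, ← qPochhammer, ← mul_sub_one]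
  exact dvd_mul_of_dvd_right (X_pow_dvd_prod_one_sub_X_pow_sub_one N m) _

lemma X_pow_dvd_qPochhammer_mul_qBinom_sub_one {K N M : ℕ} (hK : K ≤ N) (hN : N ≤ M) :
    (X : R⟦X⟧) ^ (K + 1) ∣ qPochhammer N * qBinom (K + M) K - 1 := by
  have hM : (X : R⟦X⟧) ^ (K + 1) ∣ qPochhammer M * qBinom (K + M) K - 1 := by
    rw [qPochhammer_mul_qBinom]
    exact X_pow_dvd_prod_one_sub_X_pow_sub_one K M
  have hNM := (pow_dvd_pow (X : R⟦X⟧) (by omega : K + 1 ≤ N + 1)).trans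
    (X_pow_dvd_qPochhammer_sub hN)
  convert dvd_sub hM (dvd_mul_of_dvd_left hNM (qBinom (K + M) K)) using 1
  ring

lemma X_pow_dvd_qPochhammer_mul_qBinom_two_mul_sub_one {N j : ℕ} (hj : j ≤ 2 * N) :
    (X : R⟦X⟧) ^ (min j (2 * N - j) + 1) ∣ qPochhammer N * qBinom (2 * N) j - 1 := by
  rcases le_total j N with h | h
  · have := X_pow_dvd_qPochhammer_mul_qBinom_sub_one (R := R) (M := 2 * N - j) h (by omega)
    rw [min_eq_left (by omega)]
    rwa [Nat.add_sub_cancel' hj] at this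
  · have := X_pow_dvd_qPochhammer_mul_qBinom_sub_one (R := R) (K := 2 * N - j) (by omega) h
    rwa [qBinom_add_comm, Nat.sub_add_cancel hj, ← min_eq_right (by omega : 2 * N - j ≤ j)]
      at this

lemma coeff_eq_of_X_pow_dvd_sub {n m : ℕ} {a b : R⟦X⟧} (h : X ^ n ∣ a - b) (hm : m < n) :
    coeff m a = coeff m b :=
  sub_eq_zero.mp (by rw [← map_sub]; exact X_pow_dvd_iff.mp h m hm)

def triangle (m : ℤ) : ℕ := (m * (m + 1) / 2).toNat

lemma triangle_mul_two (m : ℤ) : (triangle m : ℤ) * 2 = m * (m + 1) := by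
  have h2 : (2 : ℤ) ∣ m * (m + 1) := even_iff_two_dvd.mp (Int.even_mul_succ_self m)
  have h0 : 0 ≤ m * (m + 1) := by rcases le_or_gt 0 m with h | h <;> nlinarith
  rw [triangle, Int.toNat_of_nonneg (Int.ediv_nonneg h0 (by norm_num)), Int.ediv_mul_cancel h2]

lemma triangle_add_one (m : ℤ) : (triangle (m + 1) : ℤ) = triangle m + m + 1 := by
  linarith [triangle_mul_two m, triangle_mul_two (m + 1)]

lemma natAbs_le_triangle_add_one (m : ℤ) : m.natAbs ≤ triangle m + 1 := by
  zify
  rcases abs_cases m with ⟨h, _⟩ | ⟨h, _⟩ <;> nlinarith [triangle_mul_two m]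

lemma triangle_eq_triangle_iff {a b : ℤ} : triangle a = triangle b ↔ a = b ∨ a = -b - 1 := by
  have h : triangle a = triangle b ↔ (a - b) * (a + b + 1) = 0 := by
    rw [← Nat.cast_inj (R := ℤ)]
    constructor <;> intro h <;> linarith [triangle_mul_two a, triangle_mul_two b]
  rw [h, mul_eq_zero, sub_eq_zero]
  omega

lemma X_pow_mul_X_pow_triangle {a b : ℕ} {m m' : ℤ} (hm : m = m' + 1) (h : (a : ℤ) - b = m) :
    (X : R⟦X⟧) ^ a * X ^ triangle m' = X ^ b * X ^ triangle m := by
  rw [← pow_add, ← pow_add]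
  have := triangle_add_one m'
  rw [← hm] at this
  congr 1
  omega

-- The coefficient of `z ^ (j - N)` in `∏_{k=1}^N (1 + z q^k)(1 + z⁻¹ q^(k-1))`.
noncomputable def tripleProductCoeff (N j : ℕ) : R⟦X⟧ :=
  qBinom (2 * N) j * X ^ triangle ((j : ℤ) - N)

lemma qBinom_add_two_one (n : ℕ) :
    (qBinom (n + 2) 1 : R⟦X⟧) = 1 + X ^ (n + 1) + X * qBinom n 1 := by
  rw [qBinom_succ_succ, qBinom_succ_succ' n 0]
  simp only [qBinom_zero_right, Nat.sub_zero, mul_one, zero_add, pow_one]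
  ring

lemma qBinom_add_two_add_two (n j : ℕ) :
    (qBinom (n + 2) (j + 2) : R⟦X⟧) = X ^ (n - j) * qBinom n j
      + (1 + X ^ (n + 1)) * qBinom n (j + 1) + X ^ (j + 2) * qBinom n (j + 2) := by
  rw [qBinom_succ_succ, qBinom_succ_succ', qBinom_succ_succ']
  rcases lt_or_ge j n with h | h
  · have hX : (X : R⟦X⟧) ^ (j + 2) * X ^ (n - (j + 1)) = X ^ (n + 1) := by
      rw [← pow_add, show j + 2 + (n - (j + 1)) = n + 1 by omega]
    linear_combination qBinom n (j + 1) * hX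
  · simp [qBinom_eq_zero_of_lt (show n < j + 1 by omega),
      qBinom_eq_zero_of_lt (show n < j + 2 by omega)]

lemma tripleProductCoeff_succ_zero (N : ℕ) :
    (tripleProductCoeff (N + 1) 0 : R⟦X⟧) = X ^ N * tripleProductCoeff N 0 := by
  simp only [tripleProductCoeff, qBinom_zero_right, one_mul]
  simpa using X_pow_mul_X_pow_triangle (R := R) (a := 0) (b := N)
    (m' := (0 : ℕ) - (N + 1 : ℕ)) (m := (0 : ℕ) - N) (by push_cast; ring) (by push_cast; ring)

lemma tripleProductCoeff_succ_one (N : ℕ) :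
    (tripleProductCoeff (N + 1) 1 : R⟦X⟧) =
      (1 + X ^ (2 * N + 1)) * tripleProductCoeff N 0 + X ^ N * tripleProductCoeff N 1 := by
  have hX := X_pow_mul_X_pow_triangle (R := R) (a := 1) (b := N)
    (m' := (1 : ℕ) - (N + 1 : ℕ)) (m := (1 : ℕ) - N) (by push_cast; ring) (by push_cast; ring)
  have hT : triangle ((1 : ℕ) - (N + 1 : ℕ)) = triangle ((0 : ℕ) - N) := by
    congr 1; push_cast; ring
  simp only [tripleProductCoeff, show 2 * (N + 1) = 2 * N + 2 by ring, qBinom_add_two_one,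
    qBinom_zero_right]
  rw [← hT]
  linear_combination qBinom (2 * N) 1 * hX

lemma tripleProductCoeff_succ_add_two (N j : ℕ) :
    (tripleProductCoeff (N + 1) (j + 2) : R⟦X⟧) = X ^ (N + 1) * tripleProductCoeff N j
      + (1 + X ^ (2 * N + 1)) * tripleProductCoeff N (j + 1)
      + X ^ N * tripleProductCoeff N (j + 2) := by
  have hT : triangle ((j + 2 : ℕ) - (N + 1 : ℕ)) = triangle ((j + 1 : ℕ) - N) := by
    congr 1; push_cast; ring
  have h₁ : X ^ (2 * N - j) * qBinom (2 * N) j * X ^ triangle ((j + 1 : ℕ) - (N : ℤ))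
      = (X : R⟦X⟧) ^ (N + 1) * (qBinom (2 * N) j * X ^ triangle ((j : ℤ) - N)) := by
    rcases le_or_gt j (2 * N) with h | h
    · have hX := X_pow_mul_X_pow_triangle (R := R) (a := N + 1) (b := 2 * N - j)
        (m' := (j : ℤ) - N) (m := (j + 1 : ℕ) - N) (by push_cast; ring) (by push_cast [h]; ring)
      linear_combination -qBinom (2 * N) j * hX
    · simp [qBinom_eq_zero_of_lt h]
  have h₂ := X_pow_mul_X_pow_triangle (R := R) (a := j + 2) (b := N)
    (m' := (j + 1 : ℕ) - (N : ℤ)) (m := (j + 2 : ℕ) - N) (by push_cast; ring) (by push_cast; ring)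
  simp only [tripleProductCoeff, show 2 * (N + 1) = 2 * N + 2 by ring, qBinom_add_two_add_two]
  rw [hT]
  linear_combination h₁ + qBinom (2 * N) (j + 2) * h₂

lemma tripleProductCoeff_eq_zero {N j : ℕ} (h : 2 * N < j) :
    (tripleProductCoeff N j : R⟦X⟧) = 0 := by
  rw [tripleProductCoeff, qBinom_eq_zero_of_lt h, zero_mul]

noncomputable def tripleProductOddSum (N : ℕ) : R⟦X⟧ :=
  ∑ i ∈ range N, tripleProductCoeff N (2 * i + 1)

noncomputable def tripleProductEvenSum (N : ℕ) : R⟦X⟧ :=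
  ∑ i ∈ range (N + 1), tripleProductCoeff N (2 * i)

lemma tripleProductOddSum_succ (N : ℕ) :
    (tripleProductOddSum (N + 1) : R⟦X⟧) = (1 + X ^ (2 * N + 1)) * tripleProductEvenSum N
      + (X ^ N + X ^ (N + 1)) * tripleProductOddSum N := by
  have hE := sum_range_succ' (fun i => (tripleProductCoeff N (2 * i) : R⟦X⟧)) N
  have hO := sum_range_succ' (fun i => (tripleProductCoeff N (2 * i + 1) : R⟦X⟧)) N
  rw [sum_range_succ, tripleProductCoeff_eq_zero (by omega), add_zero] at hO
  have hstep (i : ℕ) : (tripleProductCoeff (N + 1) (2 * (i + 1) + 1) : R⟦X⟧) =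
      X ^ (N + 1) * tripleProductCoeff N (2 * i + 1)
      + (1 + X ^ (2 * N + 1)) * tripleProductCoeff N (2 * (i + 1))
      + X ^ N * tripleProductCoeff N (2 * (i + 1) + 1) :=
    tripleProductCoeff_succ_add_two N (2 * i + 1)
  rw [tripleProductOddSum, sum_range_succ', mul_zero, zero_add, tripleProductCoeff_succ_one]
  simp only [hstep, sum_add_distrib, ← mul_sum]
  rw [tripleProductEvenSum, tripleProductOddSum]
  linear_combination -(1 + X ^ (2 * N + 1)) * hE - X ^ N * hO

lemma tripleProductEvenSum_succ (N : ℕ) :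
    (tripleProductEvenSum (N + 1) : R⟦X⟧) = (1 + X ^ (2 * N + 1)) * tripleProductOddSum N
      + (X ^ N + X ^ (N + 1)) * tripleProductEvenSum N := by
  have hE := sum_range_succ' (fun i => (tripleProductCoeff N (2 * i) : R⟦X⟧)) (N + 1)
  rw [sum_range_succ, tripleProductCoeff_eq_zero (by omega), add_zero] at hE
  have hO := sum_range_succ (fun i => (tripleProductCoeff N (2 * i + 1) : R⟦X⟧)) N
  rw [tripleProductCoeff_eq_zero (by omega), add_zero] at hO
  have hstep (i : ℕ) : (tripleProductCoeff (N + 1) (2 * (i + 1)) : R⟦X⟧) =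
      X ^ (N + 1) * tripleProductCoeff N (2 * i)
      + (1 + X ^ (2 * N + 1)) * tripleProductCoeff N (2 * i + 1)
      + X ^ N * tripleProductCoeff N (2 * (i + 1)) :=
    tripleProductCoeff_succ_add_two N (2 * i)
  rw [tripleProductEvenSum, sum_range_succ', mul_zero, tripleProductCoeff_succ_zero]
  simp only [hstep, sum_add_distrib, ← mul_sum]
  rw [tripleProductEvenSum, tripleProductOddSum]
  linear_combination (1 + X ^ (2 * N + 1)) * hO - X ^ N * hE

lemma tripleProductOddSum_succ_eq (N : ℕ) :
    (tripleProductOddSum (N + 1) : R⟦X⟧) = negQPochhammer (N + 1) * negQPochhammer N := by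
  suffices tripleProductOddSum (N + 1) = negQPochhammer (N + 1) * negQPochhammer N ∧
      (tripleProductEvenSum (N + 1) : R⟦X⟧) = negQPochhammer (N + 1) * negQPochhammer N from
    this.1
  induction N with
  | zero =>
    have hO : (tripleProductOddSum 0 : R⟦X⟧) = 0 := sum_range_zero _
    have hE : (tripleProductEvenSum 0 : R⟦X⟧) = 1 := by
      simp [tripleProductEvenSum, tripleProductCoeff, triangle]
    simp [tripleProductOddSum_succ, tripleProductEvenSum_succ, hO, hE, negQPochhammer]
  | succ N ih =>
    rw [tripleProductOddSum_succ (N + 1), tripleProductEvenSum_succ (N + 1), ih.1, ih.2,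
      negQPochhammer_succ (N + 1), negQPochhammer_succ N]
    constructor <;> ring

lemma coeff_qPochhammer_mul_tripleProductOddSum (n : ℕ) :
    coeff n (qPochhammer (n + 1) * tripleProductOddSum (n + 1) : R⟦X⟧) =
      ∑ i ∈ range (n + 1), if triangle (2 * (i : ℤ) - n) = n then 1 else 0 := by
  rw [tripleProductOddSum, mul_sum, map_sum]
  refine sum_congr rfl fun i hi => ?_
  have hT : ((2 * i + 1 : ℕ) : ℤ) - (n + 1 : ℕ) = 2 * (i : ℤ) - n := by push_cast; ring
  rw [tripleProductCoeff, ← mul_assoc, coeff_mul_X_pow', hT]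
  by_cases hle : triangle (2 * (i : ℤ) - n) ≤ n
  · have hbound := natAbs_le_triangle_add_one (2 * (i : ℤ) - n)
    rw [if_pos hle, coeff_eq_of_X_pow_dvd_sub (X_pow_dvd_qPochhammer_mul_qBinom_two_mul_sub_one
      (by simp at hi; omega)) (by omega), coeff_one]
    exact if_congr (by omega) rfl rfl
  · rw [if_neg hle, if_neg (by omega)]

lemma card_filter_triangle_two_mul_sub_eq (n : ℕ) :
    #{i ∈ range (n + 1) | triangle (2 * (i : ℕ) - n) = n} =
      if ∃ j : ℕ, n * 2 = j * (j + 1) then 1 else 0 := by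
  split_ifs with h
  · obtain ⟨s, hs⟩ := h
    have hsn : triangle s = n := by
      have := triangle_mul_two s
      zify at hs
      linarith
    have hsle : s ≤ n := by nlinarith
    have hcond (i : ℕ) :
        triangle (2 * (i : ℤ) - n) = n ↔ 2 * (i : ℤ) - n = s ∨ 2 * (i : ℤ) - n = -s - 1 := by
      rw [← triangle_eq_triangle_iff, hsn]
    rw [card_eq_one]
    rcases Nat.even_or_odd (n + s) with ⟨t, ht⟩ | ⟨t, ht⟩
    · exact ⟨t, by ext i; simp only [mem_filter, mem_range, mem_singleton, hcond]; omega⟩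
    · exact ⟨t - s, by ext i; simp only [mem_filter, mem_range, mem_singleton, hcond]; omega⟩
  · rw [card_eq_zero, filter_eq_empty_iff]
    intro i _ hi
    have of_nonneg {m : ℤ} (hm : 0 ≤ m) (hmn : triangle m = n) : ∃ j : ℕ, n * 2 = j * (j + 1) :=
      ⟨m.toNat, by zify; rw [Int.toNat_of_nonneg hm, ← hmn, triangle_mul_two]⟩
    rcases le_or_gt 0 (2 * (i : ℤ) - n) with hm | hm
    · exact h (of_nonneg hm hi)
    · exact h (of_nonneg (m := -(2 * (i : ℤ) - n) - 1) (by omega)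
        ((triangle_eq_triangle_iff.mpr (Or.inr rfl)).trans hi))

lemma negQPochhammer_eq_qPochhammer [CharP R 2] (n : ℕ) :
    (negQPochhammer n : R⟦X⟧) = qPochhammer n := by
  have : CharP R⟦X⟧ 2 := charP_of_injective_ringHom C_injective 2
  simp only [negQPochhammer, qPochhammer, CharTwo.sub_eq_add]

lemma X_pow_dvd_f_one_sub_qPochhammer (n : ℕ) : X ^ (n + 1) ∣ f 1 - qPochhammer (n + 1) := by
  refine X_pow_dvd_iff.mpr fun m hm => ?_
  rw [map_sub, sub_eq_zero, f, coeff_mk]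
  simp only [one_mul]
  exact (coeff_eq_of_X_pow_dvd_sub (X_pow_dvd_qPochhammer_sub (by omega : m + 1 ≤ n + 1))
    (by omega)).symm

/-- Jacobi's identity mod 2: the coefficient of `q^n` in `(∏_{k≥1}(1-q^k))^3`
over `ZMod 2` is `1` exactly when `n` is a triangular number `j(j+1)/2`. -/
theorem jacobi_mod_two :
    ∀ n : ℕ, PowerSeries.coeff (R := ZMod 2) n ((f 1) ^ 3) =
      if ∃ j : ℕ, n * 2 = j * (j + 1) then 1 else 0 := by
  intro n
  have hcube : X ^ (n + 1) ∣ f 1 ^ 3 - qPochhammer (n + 1) * tripleProductOddSum (n + 1) := by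
    rw [tripleProductOddSum_succ_eq, negQPochhammer_eq_qPochhammer, negQPochhammer_eq_qPochhammer]
    have h := (X_pow_dvd_f_one_sub_qPochhammer n).trans (sub_dvd_pow_sub_pow _ _ 3)
    convert dvd_sub h (dvd_mul_right (X ^ (n + 1)) (qPochhammer (n + 1) ^ 2 * qPochhammer n))
      using 1
    rw [qPochhammer_succ n]
    ring
  rw [coeff_eq_of_X_pow_dvd_sub hcube n.lt_succ_self, coeff_qPochhammer_mul_tripleProductOddSum,
    sum_boole, card_filter_triangle_two_mul_sub_eq]
  split_ifs <;> simp
end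

section
/- For every positive integer d, the first 2^d coefficients of f_1^{2^d - 1} agree modulo 2 with the partition numbers: c_{2^d-1}(n) ≡ p(n) (mod 2) for all 0 ≤ n ≤ 2^d - 1. -/
open PowerSeries

/-- `∏_{k≥1}(1-q^k)` as a formal power series over `ℤ`. -/
noncomputable def fZ : PowerSeries ℤ :=
  PowerSeries.mk fun n =>
    PowerSeries.coeff n
      (∏ k ∈ Finset.range (n + 1), (1 - PowerSeries.X ^ (k + 1)))

/-- `c_t(n)`: the coefficient of `q^n` in `(∏_{k≥1}(1-q^k))^t`. -/
noncomputable def c (t n : ℕ) : ℤ := PowerSeries.coeff n (fZ ^ t)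

/-!
Write `f` for the image of `fZ` over `𝔽₂` and `P = ∑ p(n) qⁿ`, so that `P f = 1` by Euler's
product formula. Since `f` has constant term `1`, Frobenius gives
`f ^ 2ᵈ - 1 = (f - 1) ^ 2ᵈ ≡ 0 mod X ^ 2ᵈ`, hence `f ^ (2ᵈ - 1) - P = P (f ^ 2ᵈ - 1)` vanishes
in all degrees below `2ᵈ`.
-/

open Finset Filter PowerSeries.WithPiTopology

namespace PowerSeries

variable {R : Type*} [CommRing R]

theorem coeff_eq_coeff_of_X_pow_dvd_sub {N n : ℕ} {f g : R⟦X⟧} (h : X ^ N ∣ f - g)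
    (hn : n < N) : coeff n f = coeff n g :=
  sub_eq_zero.mp (map_sub (coeff n) f g ▸ X_pow_dvd_iff.mp h n hn)

theorem X_pow_dvd_prod_one_sub_X_pow_sub_one {N : ℕ} {s : Finset ℕ} (hs : ∀ i ∈ s, N ≤ i + 1) :
    X ^ N ∣ ∏ i ∈ s, (1 - X ^ (i + 1) : R⟦X⟧) - 1 := by
  refine prod_induction _ (fun f : R⟦X⟧ ↦ X ^ N ∣ f - 1) (fun f g hf hg ↦ ?_) (by simp)
    fun i hi ↦ by simpa using pow_dvd_pow X (hs i hi)
  simpa [mul_sub] using dvd_add (dvd_mul_of_dvd_right hg f) hf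

theorem X_pow_dvd_pow_expChar_pow_sub_one (p : ℕ) [ExpChar R p] {f : R⟦X⟧}
    (hf : constantCoeff f = 1) (d : ℕ) : X ^ p ^ d ∣ f ^ p ^ d - 1 := by
  have : ExpChar R⟦X⟧ p := expChar_of_injective_ringHom C_injective p
  rw [← one_pow (p ^ d), ← sub_pow_expChar_pow]
  exact pow_dvd_pow_of_dvd (X_dvd_iff.mpr (by simp [hf])) _

theorem X_pow_dvd_pow_expChar_pow_sub_one_sub_of_mul_eq_one (p : ℕ) [ExpChar R p] {f g : R⟦X⟧}
    (hf : constantCoeff f = 1) (hgf : g * f = 1) (d : ℕ) :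
    X ^ p ^ d ∣ f ^ (p ^ d - 1) - g := by
  have hpd : p ^ d ≠ 0 := pow_ne_zero d (expChar_pos R p).ne'
  have : f ^ (p ^ d - 1) - g = g * (f ^ p ^ d - 1) := by
    rw [← pow_sub_one_mul hpd, mul_sub, mul_one, mul_comm (f ^ _), ← mul_assoc, hgf, one_mul]
  rw [this]
  exact dvd_mul_of_dvd_right (X_pow_dvd_pow_expChar_pow_sub_one p hf d) g

end PowerSeries

theorem constantCoeff_fZ : constantCoeff fZ = 1 := by
  rw [← coeff_zero_eq_constantCoeff_apply, fZ, coeff_mk]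
  simp

theorem hasProd_fZ : HasProd (fun i ↦ (1 : ℤ⟦X⟧) - X ^ (i + 1)) fZ := by
  rw [HasProd, tendsto_iff_coeff_tendsto]
  refine fun n ↦ tendsto_atTop_of_eventually_const fun s (hs : range (n + 1) ⊆ s) ↦ ?_
  rw [fZ, coeff_mk, ← prod_sdiff hs]
  refine coeff_eq_coeff_of_X_pow_dvd_sub ?_ (lt_add_one n)
  rw [← sub_one_mul]
  refine dvd_mul_of_dvd_left (X_pow_dvd_prod_one_sub_X_pow_sub_one fun i hi ↦ ?_) _
  simp only [Finset.mem_sdiff, mem_range, not_lt] at hi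
  omega

theorem mk_card_partition_mul_fZ : (mk fun n ↦ (Fintype.card n.Partition : ℤ)) * fZ = 1 := by
  have hP := Nat.Partition.hasProd_powerSeriesMk_card_restricted ℤ (fun _ ↦ True)
  simp only [if_true, Nat.Partition.restricted, implies_true, filter_true, card_univ] at hP
  refine (hP.mul hasProd_fZ).unique ?_
  convert hasProd_one with i
  simp_rw [pow_mul]
  exact tsum_pow_mul_one_sub_of_constantCoeff_eq_zero (by simp)

theorem initial_segment_matches_partition_general (d : ℕ) :
    ∀ n : ℕ, n ≤ 2 ^ d - 1 →
      c (2 ^ d - 1) n ≡ (Fintype.card (Nat.Partition n) : ℤ) [ZMOD 2] := by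
  intro n hn
  let φ := Int.castRingHom (ZMod 2)
  have hdvd := X_pow_dvd_pow_expChar_pow_sub_one_sub_of_mul_eq_one 2 (f := map φ fZ)
    (g := map φ (mk fun n ↦ (Fintype.card n.Partition : ℤ)))
    (by rw [← coeff_zero_eq_constantCoeff_apply, coeff_map, coeff_zero_eq_constantCoeff_apply,
      constantCoeff_fZ, map_one]) (by rw [← map_mul, mk_card_partition_mul_fZ, map_one]) d
  have hcoeff := coeff_eq_coeff_of_X_pow_dvd_sub hdvd (n := n) (by grind [Nat.one_le_two_pow])
  rw [← map_pow, coeff_map, coeff_map, coeff_mk] at hcoeff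
  exact (ZMod.intCast_eq_intCast_iff _ _ 2).mp hcoeff

/-- For every `d ≥ 1`, the first `2^d` coefficients of `f_1^{2^d-1}` agree mod 2
with the partition numbers: `c_{2^d-1}(n) ≡ p(n) (mod 2)` for `0 ≤ n ≤ 2^d - 1`. -/
theorem initial_segment_matches_partition (d : ℕ) (hd : 1 ≤ d) :
    ∀ n : ℕ, n ≤ 2 ^ d - 1 →
      c (2 ^ d - 1) n ≡ (Fintype.card (Nat.Partition n) : ℤ) [ZMOD 2] :=
  initial_segment_matches_partition_general d
end
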